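/- Let (X,d) be a compact metric space and (f_n) a sequence of continuous self-maps that is either finitely generated or converges uniformly to a map f. If (X, f_{1,∞}) is accessible, then for every k ∈ ℕ the k-th iterate system (X, f_{1,∞}^{[k]}) is accessible. -/

import Mathlib

/-!
Accessibility provides, for every `δ > 0`, points of `U` and `V` that are `δ`-close at some time
`n`, and some multiple of `k` lies at most `k` steps after `n`. So it suffices that the compositions
of at most `k` consecutive maps form a uniformly equicontinuous family, which follows from uniform
equicontinuity of the maps `f n` themselves. On a compact space this holds for a finite family of
continuous maps, and also for a uniformly convergent sequence, by comparing every late map with the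
limit.
-/

open Filter

variable {X : Type*}

/-- `orb f n = f_n ∘ ⋯ ∘ f_1` (0-based: `f k` is the `(k+1)`-st map). -/
def orb (f : ℕ → X → X) : ℕ → X → X
  | 0 => id
  | n + 1 => f n ∘ orb f n

/-- Accessibility of the non-autonomous system along the time sequence `τ`. -/
def Accessible [MetricSpace X] (f : ℕ → X → X) (τ : ℕ → ℕ) : Prop :=
  ∀ ε : ℝ, 0 < ε → ∀ U V : Set X, IsOpen U → U.Nonempty → IsOpen V → V.Nonempty →
    ∃ x ∈ U, ∃ y ∈ V, ∃ n : ℕ, dist (orb f (τ n) x) (orb f (τ n) y) < ε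

open Uniformity

section Equicontinuity

variable {ι κ α β : Type*} [UniformSpace α] [UniformSpace β]

theorem Set.Finite.uniformEquicontinuous {H : Set (β → α)} (hH : H.Finite)
    (hc : ∀ g ∈ H, UniformContinuous g) : H.UniformEquicontinuous := by
  have := hH.to_subtype
  exact uniformEquicontinuous_finite.2 fun g => hc g g.2

theorem TendstoUniformly.uniformEquicontinuous {F : ι → β → α} {g : β → α}
    (hF : ∀ i, UniformContinuous (F i)) (h : TendstoUniformly F g cofinite) :
    UniformEquicontinuous F := by
  rcases finite_or_infinite ι with hι | hι
  · exact uniformEquicontinuous_finite.2 hF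
  intro U hU
  obtain ⟨t, ht, htsymm, htU⟩ := comp_comp_symm_mem_uniformity_sets hU
  have hfar : {i | ¬∀ x, (g x, F i x) ∈ t}.Finite := eventually_cofinite.1 (h t ht)
  have hnear : ∀ᶠ xy : β × β in 𝓤 β, ∀ i ∈ {i | ¬∀ x, (g x, F i x) ∈ t},
      (F i xy.1, F i xy.2) ∈ U :=
    (eventually_all_finite hfar).2 fun i _ => hF i hU
  filter_upwards [hnear, h.uniformContinuous (Frequently.of_forall hF) ht] with xy hnear hg i
  by_cases hi : ∀ x, (g x, F i x) ∈ t
  · exact htU ⟨g xy.2, ⟨g xy.1, SetRel.symm t (hi xy.1), hg⟩, hi xy.2⟩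
  · exact hnear i hi

theorem UniformEquicontinuous.comp_uniformEquicontinuous {F : ι → β → α} {G : κ → β → β}
    (hF : UniformEquicontinuous F) (hG : UniformEquicontinuous G) (φ : κ → ι) :
    UniformEquicontinuous fun j => F (φ j) ∘ G j := by
  intro U hU
  filter_upwards [hG _ (hF U hU)] with xy hxy j using hxy j (φ j)

end Equicontinuity

theorem orb_add (f : ℕ → X → X) (n r : ℕ) :
    orb f (n + r) = orb (fun i => f (n + i)) r ∘ orb f n := by
  induction r with
  | zero => rfl
  | succ r ih =>
    show f (n + r) ∘ orb f (n + r) = (f (n + r) ∘ orb _ r) ∘ orb f n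
    rw [ih, Function.comp_assoc]

theorem UniformEquicontinuous.orb_shift [UniformSpace X] {f : ℕ → X → X}
    (hf : UniformEquicontinuous f) (r : ℕ) :
    UniformEquicontinuous fun m => orb (fun i => f (m + i)) r := by
  induction r with
  | zero => exact fun U hU => mem_of_superset hU fun _ h _ => h
  | succ r ih => exact hf.comp_uniformEquicontinuous ih (· + r)

theorem Accessible.of_uniformEquicontinuous [MetricSpace X] {f : ℕ → X → X} {τ : ℕ → ℕ}
    (hacc : Accessible f id) (hf : UniformEquicontinuous f) (k : ℕ)
    (hτ : ∀ n, ∃ m, n ≤ τ m ∧ τ m ≤ n + k) : Accessible f τ := by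
  intro ε hε U V hU hUne hV hVne
  have hclose : ∀ᶠ xy : X × X in 𝓤 X, ∀ s ∈ Set.Iic k, ∀ m,
      dist (orb (fun i => f (m + i)) s xy.1) (orb (fun i => f (m + i)) s xy.2) < ε :=
    (eventually_all_finite (Set.finite_Iic k)).2 fun s _ =>
      Metric.uniformEquicontinuous_iff_right.1 (hf.orb_shift s) ε hε
  obtain ⟨δ, hδ, hδclose⟩ := Metric.mem_uniformity_dist.1 hclose
  obtain ⟨x, hx, y, hy, n, hn⟩ := hacc δ hδ U V hU hUne hV hVne
  obtain ⟨m, hnm, hmk⟩ := hτ n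
  obtain ⟨s, hs⟩ := Nat.exists_eq_add_of_le hnm
  refine ⟨x, hx, y, hy, m, ?_⟩
  rw [hs, orb_add]
  exact hδclose hn s (by simp only [Set.mem_Iic]; omega) n

theorem stmt_9 [MetricSpace X] [CompactSpace X] (f : ℕ → X → X)
    (hf : ∀ n, Continuous (f n))
    (hgen : (∃ F : Set (X → X), F.Finite ∧ (∀ g ∈ F, Continuous g) ∧ ∀ n, f n ∈ F) ∨
      (∃ g : X → X, TendstoUniformly f g atTop))
    (hacc : Accessible f id) (k : ℕ) (hk : 0 < k) :
    Accessible f (fun n => k * n) := by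
  have hequi : UniformEquicontinuous f := by
    rcases hgen with ⟨F, hFfin, hFcont, hmem⟩ | ⟨g, hg⟩
    · refine uniformEquicontinuous_iff_range.2 <| Set.UniformEquicontinuous.mono ?_
        (Set.range_subset_iff.2 hmem)
      exact hFfin.uniformEquicontinuous fun g hg =>
        CompactSpace.uniformContinuous_of_continuous (hFcont g hg)
    · rw [← Nat.cofinite_eq_atTop] at hg
      exact hg.uniformEquicontinuous fun n => CompactSpace.uniformContinuous_of_continuous (hf n)
  refine hacc.of_uniformEquicontinuous hequi k fun n => ⟨n / k + 1, ?_, ?_⟩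
  · exact (Nat.lt_mul_div_succ n hk).le
  · rw [mul_add_one]
    linarith [Nat.mul_div_le n k]
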